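/- Suppose X_F ⊆ X_S, let P̃_S = ⋃ₙ P⁽ⁿ⁾ and P_S = { x ∈ X_S : ∃x̃ ∈ P̃_S with ‖x̃ − x‖ ≤ ε }, and assume X₀ ⊆ P_S. Then for every x₀ ∈ X₀ and every x̃₀ ∈ P̃_S with ‖x̃₀ − x₀‖ ≤ ε, every trajectory of the closed-loop system generated by the following refined self-triggered scheme achieves reachability and safety: at each communication time k_ℓ (k₀ = 0), choose any (ũ_ℓ, m_ℓ) ∈ C̃(x̃_ℓ), apply the input ũ_ℓ constantly for m_ℓ steps so that x_{k_ℓ + p} = φ(x_{k_ℓ}, ũ_ℓ, p) for p ∈ {1,…,m_ℓ} and k_{ℓ+1} = k_ℓ + m_ℓ, and choose any x̃_{ℓ+1} ∈ G̃(x̃_ℓ, ũ_ℓ, m_ℓ) with ‖x̃_{ℓ+1} − x_{k_{ℓ+1}}‖ ≤ ε (such a point exists, e.g., any nearest grid point to x_{k_{ℓ+1}}). Namely, there exists N ≤ ℒ(x̃₀) such that x_{k_N} ∈ X_F and x_k ∈ X_S for all k ∈ {0, 1, …, k_N}. (Theorem 1 of the paper: the controller refined from the symbolic controller C̃ is valid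 for the system x_{k+1} = f(x_k, u_k) with specification (X_S, X_F) whenever X₀ ⊆ P_S.) -/

import Mathlib

/-- The Euclidean state space ℝⁿ. -/
abbrev Euc (n : ℕ) := EuclideanSpace ℝ (Fin n)

/-- `phi f x u m` is the state reached from `x` by applying the input `u`
constantly for `m` time steps, i.e. the `m`-fold iterate of `y ↦ f y u` at `x`. -/
def phi {n nu : ℕ} (f : Euc n → Euc nu → Euc n) (x : Euc n) (u : Euc nu) (m : ℕ) : Euc n :=
  (fun y => f y u)^[m] x

/-- The grid `Λ_η ⊆ ℝⁿ`: points whose coordinates are integer multiples of `2η/√n`. -/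
def grid (n : ℕ) (η : ℝ) : Set (Euc n) :=
  { y | ∀ i : Fin n, ∃ a : ℤ, y i = (2 * η / Real.sqrt n) * (a : ℝ) }

/-- Symbolic transition map: `G̃(x̃,ũ,m) = { x̃⁺ ∈ Λ_{η_x} : ‖x̃⁺ − φ(x̃,ũ,m)‖ ≤ Lᵐ ε + η_x }`. -/
def Gt {n nu : ℕ} (f : Euc n → Euc nu → Euc n) (L ε ηx : ℝ)
    (xt : Euc n) (ut : Euc nu) (m : ℕ) : Set (Euc n) :=
  { x' | x' ∈ grid n ηx ∧ ‖x' - phi f xt ut m‖ ≤ L ^ m * ε + ηx }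

/-- `Int_ε(A)`: points of `A` whose closed `ε`-ball is contained in `A`. -/
def IntEps {n : ℕ} (ε : ℝ) (A : Set (Euc n)) : Set (Euc n) :=
  { x ∈ A | Metric.closedBall x ε ⊆ A }

/-- The predecessor map `Pre(P)` of the reachability game. -/
def Pre {n nu : ℕ} (f : Euc n → Euc nu → Euc n) (L ε ηx : ℝ)
    (Ut : Set (Euc nu)) (Mmax : ℕ) (XtS : Set (Euc n)) (P : Set (Euc n)) : Set (Euc n) :=
  { xt ∈ XtS | ∃ ut ∈ Ut, ∃ m : ℕ, 1 ≤ m ∧ m ≤ Mmax ∧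
      Gt f L ε ηx xt ut m ⊆ P ∧ ∀ p : ℕ, 1 ≤ p → p ≤ m → Gt f L ε ηx xt ut p ⊆ XtS }

/-- The iteration `P⁽⁰⁾ = X̃_F`, `P⁽ⁿ⁺¹⁾ = P⁽ⁿ⁾ ∪ Pre(P⁽ⁿ⁾)` of Algorithm 1. -/
def Pseq {n nu : ℕ} (f : Euc n → Euc nu → Euc n) (L ε ηx : ℝ)
    (Ut : Set (Euc nu)) (Mmax : ℕ) (XtS XtF : Set (Euc n)) : ℕ → Set (Euc n)
  | 0 => XtF
  | k + 1 => Pseq f L ε ηx Ut Mmax XtS XtF k ∪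
      Pre f L ε ηx Ut Mmax XtS (Pseq f L ε ηx Ut Mmax XtS XtF k)

/-- The rank `ℒ(x̃) ∈ ℕ ∪ {∞}` : the least `k` with `x̃ ∈ P⁽ᵏ⁾` (and `∞` if there is none). -/
noncomputable def rankL {n nu : ℕ} (f : Euc n → Euc nu → Euc n) (L ε ηx : ℝ)
    (Ut : Set (Euc nu)) (Mmax : ℕ) (XtS XtF : Set (Euc n)) (xt : Euc n) : ℕ∞ :=
  sInf ((fun k : ℕ => (k : ℕ∞)) '' { k : ℕ | xt ∈ Pseq f L ε ηx Ut Mmax XtS XtF k })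

/-- The symbolic controller `C̃`. -/
def Ct {n nu : ℕ} (f : Euc n → Euc nu → Euc n) (L ε ηx : ℝ)
    (Ut : Set (Euc nu)) (Mmax : ℕ) (XtS XtF : Set (Euc n)) (xt : Euc n) :
    Set (Euc nu × ℕ) :=
  { um | um.1 ∈ Ut ∧ 1 ≤ um.2 ∧ um.2 ≤ Mmax ∧
      (∀ x' ∈ Gt f L ε ηx xt um.1 um.2,
        rankL f L ε ηx Ut Mmax XtS XtF x' < rankL f L ε ηx Ut Mmax XtS XtF xt) ∧
      ∀ p : ℕ, 1 ≤ p → p ≤ um.2 → Gt f L ε ηx xt um.1 p ⊆ XtS }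

/-!
Along the closed loop the symbolic state `x̃_ℓ` stays within `ε` of the true state `x_{k_ℓ}`,
since this is how `x̃_{ℓ+1}` is chosen. Inside a round, the true state `φ(x_{k_ℓ}, ũ_ℓ, p)` is
within `Lᵖ ε` of `φ(x̃_ℓ, ũ_ℓ, p)` by the Lipschitz bound, so a grid point within `η_x` of it lies
in `G̃(x̃_ℓ, ũ_ℓ, p) ⊆ Int_ε(X_S)`, and the `ε`-ball around that grid point, which contains the
true state, lies in `X_S`. The controller makes the rank `ℒ(x̃_ℓ)` drop by at least one per
round, so after `N ≤ ℒ(x̃₀)` rounds the rank is `0`, i.e. `x̃_N ∈ Int_ε(X_F)`, and then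
`x_{k_N} ∈ X_F`.
-/

open Metric

section

variable {n nu : ℕ}

theorem norm_phi_sub_phi_le {f : Euc n → Euc nu → Euc n} {u : Euc nu} {L : ℝ} (hL : 0 ≤ L)
    (hf : ∀ x₁ x₂, ‖f x₁ u - f x₂ u‖ ≤ L * ‖x₁ - x₂‖) (x₁ x₂ : Euc n) (p : ℕ) :
    ‖phi f x₁ u p - phi f x₂ u p‖ ≤ L ^ p * ‖x₁ - x₂‖ := by
  lift L to NNReal using hL
  have hlip : LipschitzWith L (fun y => f y u) :=
    LipschitzWith.of_dist_le_mul fun a b => by simpa only [dist_eq_norm] using hf a b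
  unfold phi
  simpa only [dist_eq_norm, NNReal.coe_pow] using (hlip.iterate p).dist_le_mul x₁ x₂

theorem exists_mem_grid_norm_sub_le {η : ℝ} (hη : 0 < η) (z : Euc n) :
    ∃ y ∈ grid n η, ‖y - z‖ ≤ η := by
  set c : ℝ := 2 * η / Real.sqrt n
  let y : Euc n := WithLp.toLp 2 fun i => c * round (z i / c)
  refine ⟨y, fun i => ⟨round (z i / c), rfl⟩, ?_⟩
  have hcoord (i : Fin n) : ‖(y - z) i‖ ^ 2 ≤ η ^ 2 / n := by
    have hc : 0 < c := by have := i.pos; positivity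
    have hyz : (y - z) i = c * ((round (z i / c) : ℝ) - z i / c) := by
      change c * _ - z i = _
      field_simp
    calc ‖(y - z) i‖ ^ 2 = c ^ 2 * |z i / c - round (z i / c)| ^ 2 := by
          rw [hyz, Real.norm_eq_abs, abs_mul, abs_of_pos hc, abs_sub_comm, mul_pow]
      _ ≤ c ^ 2 * (1 / 2) ^ 2 := by gcongr; exact abs_sub_round _
      _ = η ^ 2 / n := by
          rw [div_pow, mul_pow, Real.sq_sqrt (Nat.cast_nonneg n)]; ring
  rw [EuclideanSpace.norm_eq, Real.sqrt_le_left hη.le]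
  calc ∑ i, ‖(y - z) i‖ ^ 2 ≤ ∑ _i : Fin n, η ^ 2 / n := Finset.sum_le_sum fun i _ => hcoord i
    _ ≤ η ^ 2 := by
      rcases n.eq_zero_or_pos with rfl | hn
      · simp [sq_nonneg]
      · rw [Finset.sum_const, Finset.card_univ, Fintype.card_fin, nsmul_eq_mul,
          mul_div_cancel₀ _ (by positivity)]

theorem mem_of_mem_IntEps {ε : ℝ} {A : Set (Euc n)} {y x : Euc n} (hy : y ∈ IntEps ε A)
    (hyx : ‖y - x‖ ≤ ε) : x ∈ A :=
  hy.2 (by rwa [mem_closedBall, dist_eq_norm, norm_sub_rev])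

/-- The inflation `Lᵖ ε + η_x` in `G̃` is exactly what puts a grid point near the true state
into `G̃(x̃, u, p)`. -/
theorem phi_mem_of_Gt_subset_IntEps {f : Euc n → Euc nu → Euc n} {u : Euc nu} {L ε ηx : ℝ}
    {xt x : Euc n} {p : ℕ} {A : Set (Euc n)} (hL : 0 ≤ L)
    (hf : ∀ x₁ x₂, ‖f x₁ u - f x₂ u‖ ≤ L * ‖x₁ - x₂‖) (hηx : 0 < ηx) (hε : ηx ≤ ε)
    (hG : Gt f L ε ηx xt u p ⊆ IntEps ε A) (hclose : ‖xt - x‖ ≤ ε) : phi f x u p ∈ A := by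
  obtain ⟨y, hy, hyx⟩ := exists_mem_grid_norm_sub_le hηx (phi f x u p)
  have hyG : y ∈ Gt f L ε ηx xt u p := by
    refine ⟨hy, ?_⟩
    calc ‖y - phi f xt u p‖ ≤ ‖y - phi f x u p‖ + ‖phi f x u p - phi f xt u p‖ :=
          norm_sub_le_norm_sub_add_norm_sub _ _ _
      _ ≤ ηx + L ^ p * ε := by
          gcongr
          refine (norm_phi_sub_phi_le hL hf x xt p).trans ?_
          rw [norm_sub_rev]
          gcongr
      _ = L ^ p * ε + ηx := add_comm _ _
  exact mem_of_mem_IntEps (hG hyG) (hyx.trans hε)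

theorem forall_le_add_mem_of_round {f : Euc n → Euc nu → Euc n} {u : Euc nu} {L ε ηx : ℝ}
    {xt : Euc n} {x : ℕ → Euc n} {k m : ℕ} {A : Set (Euc n)} (hL : 0 ≤ L)
    (hf : ∀ x₁ x₂, ‖f x₁ u - f x₂ u‖ ≤ L * ‖x₁ - x₂‖) (hηx : 0 < ηx) (hε : ηx ≤ ε)
    (hG : ∀ p, 1 ≤ p → p ≤ m → Gt f L ε ηx xt u p ⊆ IntEps ε A)
    (hclose : ‖xt - x k‖ ≤ ε) (hx : ∀ p, 1 ≤ p → p ≤ m → x (k + p) = phi f (x k) u p)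
    (hsafe : ∀ j ≤ k, x j ∈ A) : ∀ j ≤ k + m, x j ∈ A := by
  intro j hj
  by_cases hjk : j ≤ k
  · exact hsafe j hjk
  · obtain ⟨p, rfl⟩ := Nat.exists_eq_add_of_le (not_le.1 hjk).le
    rw [hx p (by omega) (by omega)]
    exact phi_mem_of_Gt_subset_IntEps hL hf hηx hε (hG p (by omega) (by omega)) hclose

theorem mem_of_rankL_eq_zero {f : Euc n → Euc nu → Euc n} {L ε ηx : ℝ} {Ut : Set (Euc nu)}
    {Mmax : ℕ} {XtS XtF : Set (Euc n)} {xt : Euc n}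
    (h : rankL f L ε ηx Ut Mmax XtS XtF xt = 0) : xt ∈ XtF := by
  have hne : ((fun k : ℕ => (k : ℕ∞)) ''
      { k : ℕ | xt ∈ Pseq f L ε ηx Ut Mmax XtS XtF k }).Nonempty := by
    by_contra hempty
    rw [Set.not_nonempty_iff_eq_empty] at hempty
    simp [rankL, hempty] at h
  obtain ⟨k, hk, hk0⟩ : rankL f L ε ηx Ut Mmax XtS XtF xt ∈ _ := csInf_mem hne
  rw [h] at hk0
  rwa [Nat.cast_eq_zero.1 hk0] at hk

end

theorem natCast_lt_of_add_le_of_ne_zero {r R : ℕ∞} {ℓ : ℕ} (h : r + ℓ ≤ R) (hr : r ≠ 0) :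
    (ℓ : ℕ∞) < R := by
  refine (ENat.add_one_le_iff (ENat.natCast_ne_top ℓ)).1 (le_trans ?_ h)
  rw [add_comm]
  gcongr
  exact Order.one_le_iff_ne_zero.2 hr

theorem add_natCast_succ_le_of_lt {r r' R : ℕ∞} {ℓ : ℕ} (h : r + ℓ ≤ R) (hlt : r' < r) :
    r' + ↑(ℓ + 1) ≤ R :=
  calc r' + ↑(ℓ + 1) = r' + 1 + ℓ := by push_cast; ring
    _ ≤ r + ℓ := by gcongr; exact Order.add_one_le_of_lt hlt
    _ ≤ R := h

theorem exists_invariant_and_target {α : Type*} [Preorder α] [WellFoundedLT α] (r : ℕ → α)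
    {P Q : ℕ → Prop} (h0 : P 0) (hstep : ∀ ℓ, P ℓ → ¬Q ℓ → P (ℓ + 1) ∧ r (ℓ + 1) < r ℓ) :
    ∃ N, P N ∧ Q N := by
  suffices ∀ a ℓ, r ℓ = a → P ℓ → ∃ N, P N ∧ Q N from this _ 0 rfl h0
  intro a
  induction a using WellFoundedLT.induction with
  | _ a ih =>
    rintro ℓ rfl hP
    by_cases hQ : Q ℓ
    · exact ⟨ℓ, hP, hQ⟩
    · obtain ⟨hP', hlt⟩ := hstep ℓ hP hQ
      exact ih _ hlt _ rfl hP'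

theorem refined_controller_valid_general {n nu : ℕ}
    (X₀ : Set (Euc n)) (U : Set (Euc nu))
    (f : Euc n → Euc nu → Euc n) (L : ℝ) (hL : 0 ≤ L)
    (hf : ∀ x₁ x₂ : Euc n, ∀ u ∈ U, ‖f x₁ u - f x₂ u‖ ≤ L * ‖x₁ - x₂‖)
    (ηx ηu : ℝ) (hηx : 0 < ηx)
    (ε : ℝ) (hε : ηx ≤ ε) (Mmax : ℕ)
    (XS XF : Set (Euc n))
    (Ut : Set (Euc nu)) (hUt : Ut = grid nu ηu ∩ U)
    (XtS : Set (Euc n)) (hXtS : XtS = grid n ηx ∩ IntEps ε XS)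
    (XtF : Set (Euc n)) (hXtF : XtF = grid n ηx ∩ IntEps ε XF)
    -- the winning sets `P̃_S` and `P_S`, and the initial condition `X₀ ⊆ P_S`
    (PtS : Set (Euc n))
    (PS : Set (Euc n)) (hPS : PS = { x ∈ XS | ∃ xt ∈ PtS, ‖xt - x‖ ≤ ε })
    (hX0 : X₀ ⊆ PS)
    -- the initial state and a related initial symbolic state
    (x0 : Euc n) (hx0 : x0 ∈ X₀)
    (xt0 : Euc n) (hclose0 : ‖xt0 - x0‖ ≤ ε)
    -- a closed-loop trajectory generated by the refined self-triggered scheme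
    (x : ℕ → Euc n) (hx : x 0 = x0)
    (xts : ℕ → Euc n) (hxts : xts 0 = xt0)
    (kt : ℕ → ℕ) (hk0 : kt 0 = 0)
    (u : ℕ → Euc nu) (ms : ℕ → ℕ)
    (hstep : ∀ ℓ : ℕ, (ℓ : ℕ∞) < rankL f L ε ηx Ut Mmax XtS XtF xt0 →
      (u ℓ, ms ℓ) ∈ Ct f L ε ηx Ut Mmax XtS XtF (xts ℓ) ∧
      kt (ℓ + 1) = kt ℓ + ms ℓ ∧
      (∀ p : ℕ, 1 ≤ p → p ≤ ms ℓ → x (kt ℓ + p) = phi f (x (kt ℓ)) (u ℓ) p) ∧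
      xts (ℓ + 1) ∈ Gt f L ε ηx (xts ℓ) (u ℓ) (ms ℓ) ∧
      ‖xts (ℓ + 1) - x (kt (ℓ + 1))‖ ≤ ε) :
    -- reachability and safety: the trajectory reaches `X_F` within `ℒ(x̃₀)` rounds,
    -- staying in `X_S` at all times until then
    ∃ N : ℕ, (N : ℕ∞) ≤ rankL f L ε ηx Ut Mmax XtS XtF xt0 ∧
      x (kt N) ∈ XF ∧ ∀ k : ℕ, k ≤ kt N → x k ∈ XS := by
  set rank := rankL f L ε ηx Ut Mmax XtS XtF
  have hXtS_sub : XtS ⊆ IntEps ε XS := hXtS ▸ Set.inter_subset_right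
  let Inv (ℓ : ℕ) : Prop :=
    rank (xts ℓ) + ℓ ≤ rank xt0 ∧ ‖xts ℓ - x (kt ℓ)‖ ≤ ε ∧ ∀ k ≤ kt ℓ, x k ∈ XS
  have hInv0 : Inv 0 := by
    refine ⟨by simp [hxts], by rwa [hxts, hk0, hx], fun k hk => ?_⟩
    obtain rfl : k = 0 := by omega
    rw [hx]
    exact (hPS ▸ hX0 hx0).1
  have hround (ℓ : ℕ) (hInv : Inv ℓ) (hne : rank (xts ℓ) ≠ 0) :
      Inv (ℓ + 1) ∧ rank (xts (ℓ + 1)) < rank (xts ℓ) := by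
    obtain ⟨hrank, hclose, hsafe⟩ := hInv
    obtain ⟨⟨huUt, -, -, hdec, hGS⟩, hkt, hxφ, hGt, hclose'⟩ :=
      hstep ℓ (natCast_lt_of_add_le_of_ne_zero hrank hne)
    have hlt := hdec _ hGt
    refine ⟨⟨add_natCast_succ_le_of_lt hrank hlt, hclose', ?_⟩, hlt⟩
    exact hkt ▸ forall_le_add_mem_of_round hL (hf · · _ (hUt ▸ huUt).2) hηx hε
      (fun p h1 h2 => (hGS p h1 h2).trans hXtS_sub) hclose hxφ hsafe
  obtain ⟨N, ⟨hN, hclose, hsafe⟩, hN0⟩ :=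
    exists_invariant_and_target (fun ℓ => rank (xts ℓ)) (Q := fun ℓ => rank (xts ℓ) = 0)
      hInv0 hround
  refine ⟨N, by simpa [hN0] using hN, ?_, hsafe⟩
  exact mem_of_mem_IntEps (hXtF ▸ mem_of_rankL_eq_zero hN0).2 hclose

/-- Theorem 1: the controller refined from the symbolic controller `C̃` is valid for
the system `x_{k+1} = f(x_k,u_k)` with specification `(X_S, X_F)` whenever
`X₀ ⊆ P_S = { x ∈ X_S : ∃ x̃ ∈ P̃_S, ‖x̃ − x‖ ≤ ε }`, `P̃_S = ⋃ₙ P⁽ⁿ⁾`. Closed loop: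
at round `ℓ` (communication times `k₀ = 0`, `k_{ℓ+1} = k_ℓ + m_ℓ`), pick any
`(ũ_ℓ, m_ℓ) ∈ C̃(x̃_ℓ)`, apply `ũ_ℓ` constantly so `x_{k_ℓ+p} = φ(x_{k_ℓ},ũ_ℓ,p)`,
and pick any `x̃_{ℓ+1} ∈ G̃(x̃_ℓ,ũ_ℓ,m_ℓ)` with `‖x̃_{ℓ+1} − x_{k_{ℓ+1}}‖ ≤ ε`. Then
there is `N ≤ ℒ(x̃₀)` with `x_{k_N} ∈ X_F` and `x_k ∈ X_S` for all `k ≤ k_N`. -/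
theorem refined_controller_valid {n nu : ℕ} (hn : 1 ≤ n)
    (X₀ : Set (Euc n)) (U : Set (Euc nu))
    (f : Euc n → Euc nu → Euc n) (L : ℝ) (hL : 0 ≤ L)
    (hf : ∀ x₁ x₂ : Euc n, ∀ u ∈ U, ‖f x₁ u - f x₂ u‖ ≤ L * ‖x₁ - x₂‖)
    (ηx ηu : ℝ) (hηx : 0 < ηx) (hηu : 0 < ηu)
    (ε : ℝ) (hε : ηx ≤ ε) (Mmax : ℕ) (hM : 1 ≤ Mmax)
    (XS XF : Set (Euc n)) (hFS : XF ⊆ XS)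
    (Ut : Set (Euc nu)) (hUt : Ut = grid nu ηu ∩ U)
    (XtS : Set (Euc n)) (hXtS : XtS = grid n ηx ∩ IntEps ε XS)
    (XtF : Set (Euc n)) (hXtF : XtF = grid n ηx ∩ IntEps ε XF)
    -- the winning sets `P̃_S` and `P_S`, and the initial condition `X₀ ⊆ P_S`
    (PtS : Set (Euc n)) (hPtS : PtS = ⋃ k : ℕ, Pseq f L ε ηx Ut Mmax XtS XtF k)
    (PS : Set (Euc n)) (hPS : PS = { x ∈ XS | ∃ xt ∈ PtS, ‖xt - x‖ ≤ ε })
    (hX0 : X₀ ⊆ PS)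
    -- the initial state and a related initial symbolic state
    (x0 : Euc n) (hx0 : x0 ∈ X₀)
    (xt0 : Euc n) (hxt0 : xt0 ∈ PtS) (hclose0 : ‖xt0 - x0‖ ≤ ε)
    -- a closed-loop trajectory generated by the refined self-triggered scheme
    (x : ℕ → Euc n) (hx : x 0 = x0)
    (xts : ℕ → Euc n) (hxts : xts 0 = xt0)
    (kt : ℕ → ℕ) (hk0 : kt 0 = 0)
    (u : ℕ → Euc nu) (ms : ℕ → ℕ)
    (hstep : ∀ ℓ : ℕ, (ℓ : ℕ∞) < rankL f L ε ηx Ut Mmax XtS XtF xt0 →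
      (u ℓ, ms ℓ) ∈ Ct f L ε ηx Ut Mmax XtS XtF (xts ℓ) ∧
      kt (ℓ + 1) = kt ℓ + ms ℓ ∧
      (∀ p : ℕ, 1 ≤ p → p ≤ ms ℓ → x (kt ℓ + p) = phi f (x (kt ℓ)) (u ℓ) p) ∧
      xts (ℓ + 1) ∈ Gt f L ε ηx (xts ℓ) (u ℓ) (ms ℓ) ∧
      ‖xts (ℓ + 1) - x (kt (ℓ + 1))‖ ≤ ε) :
    -- reachability and safety: the trajectory reaches `X_F` within `ℒ(x̃₀)` rounds,
    -- staying in `X_S` at all times until then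
    ∃ N : ℕ, (N : ℕ∞) ≤ rankL f L ε ηx Ut Mmax XtS XtF xt0 ∧
      x (kt N) ∈ XF ∧ ∀ k : ℕ, k ≤ kt N → x k ∈ XS :=
  refined_controller_valid_general X₀ U f L hL hf ηx ηu hηx ε hε Mmax XS XF Ut hUt XtS hXtS XtF hXtF
    PtS PS hPS hX0 x0 hx0 xt0 hclose0 x hx xts hxts kt hk0 u ms hstep
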